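/- arXiv:2312.04686 — 4 statements merged into one kernel-verified Lean document; each statement's English description precedes it below -/
import Mathlib

section
/- Let n ≥ 5 and suppose D : Fin n → ℕ with ∑ D(v) ≤ n and D(q) = 0 for some vertex q. If U ⊆ Fin n is nonempty, q ∉ U, and every v ∈ U satisfies D(v) ≥ n - |U|, then |U| = 1 or |U| = n - 1. -/
/-- Burning lemma on the complete graph `K n` with `n ≥ 5` and at most `n`
chips: if `D q = 0` and `U` is a nonempty set avoiding `q` whose every vertex
holds at least `n - |U|` chips, then `|U| = 1` or `|U| = n - 1`. -/
theorem complete_graph_burning_five (n : ℕ) (hn : 5 ≤ n) (D : Fin n → ℕ)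
    (hdeg : ∑ v, D v ≤ n) (q : Fin n) (hq : D q = 0)
    (U : Finset (Fin n)) (hU : U.Nonempty) (hqU : q ∉ U)
    (hchips : ∀ v ∈ U, n - U.card ≤ D v) :
    U.card = 1 ∨ U.card = n - 1 := by
  set k := U.card with hk
  have hk1 : 1 ≤ k := hU.card_pos
  have hkn : k ≤ n - 1 := by
    have : U ⊆ Finset.univ.erase q := fun v hv =>
      Finset.mem_erase.mpr ⟨fun h => hqU (h ▸ hv), Finset.mem_univ v⟩
    have := Finset.card_le_card this
    simpa using this
  have hsum : k * (n - k) ≤ ∑ v ∈ U, D v := by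
    calc k * (n - k) = ∑ _v ∈ U, (n - k) := by rw [Finset.sum_const, smul_eq_mul]
    _ ≤ ∑ v ∈ U, D v := Finset.sum_le_sum hchips
  have hle : ∑ v ∈ U, D v ≤ n :=
    le_trans (Finset.sum_le_sum_of_subset (Finset.subset_univ U)) hdeg
  by_contra h
  push_neg at h
  obtain ⟨h1, h2⟩ := h
  have hk2 : 2 ≤ k := by omega
  have hkn2 : k ≤ n - 2 := by omega
  have hm : 2 ≤ n - k := by omega
  have hkm : k + (n - k) = n := by omega
  have key : n < k * (n - k) := by
    set m := n - k with hm'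
    nlinarith [hkm, hk2, hm, hn]
  omega
end

section
/- For m ≥ n ≥ 2, any two distinct rows of the queen's graph Q_{m,n} are joined by at least 2(m - n + 1) diagonal edges. Consequently, if U ⊆ V(Q_{m,n}) contains an entire row and its complement contains an entire row, then |E(U, U^c)| ≥ (n-1)m + 2(m-n+1) ≥ (m-1)n + 2. -/
/-- The queen's graph on an `m × n` board: vertices are `Fin m × Fin n`
(`m` columns and `n` rows), and two distinct vertices are adjacent iff they
share a row, share a column, or lie on a common diagonal of slope `±1`. -/
def Q (m n : ℕ) : SimpleGraph (Fin m × Fin n) where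
  Adj u v := u ≠ v ∧ (u.1 = v.1 ∨ u.2 = v.2 ∨
    ((u.1.1 : ℤ) - v.1.1 = (u.2.1 : ℤ) - v.2.1) ∨
    ((u.1.1 : ℤ) - v.1.1 = (v.2.1 : ℤ) - u.2.1))
  symm := ⟨by
    rintro u v ⟨hne, h⟩
    refine ⟨hne.symm, ?_⟩
    rcases h with h | h | h | h
    · exact Or.inl h.symm
    · exact Or.inr (Or.inl h.symm)
    · exact Or.inr (Or.inr (Or.inl (by omega)))
    · exact Or.inr (Or.inr (Or.inr (by omega)))⟩
  loopless := ⟨fun v h => h.1 rfl⟩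

instance (m n : ℕ) : DecidableRel (Q m n).Adj := fun u v =>
  inferInstanceAs (Decidable (u ≠ v ∧ (u.1 = v.1 ∨ u.2 = v.2 ∨
    ((u.1.1 : ℤ) - v.1.1 = (u.2.1 : ℤ) - v.2.1) ∨
    ((u.1.1 : ℤ) - v.1.1 = (v.2.1 : ℤ) - u.2.1))))

/-!
Every column is a clique of `Q m n` meeting both `U` (in the full row `r`) and `Uᶜ` (in the
empty row `s`); if it has `k` vertices in `U` it carries `k (n - k) ≥ n - 1` cut edges, so the
vertical cut edges number at least `(n - 1) m`. The diagonal edges from row `r` to row `s` are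
cut edges too, and they correspond to the column pairs `(a, b)` with `a - b = ±(r - s)`: for
`|r - s| = d` there are `2 (m - d) ≥ 2 (m - n + 1)` of them.
-/

open Finset

/-- `(a, b) ∈ diagonalPairs m (r - s)` iff the squares `(a, r)` and `(b, s)` share a diagonal. -/
def diagonalPairs (m : ℕ) (d : ℤ) : Finset (Fin m × Fin m) :=
  univ.filter fun p => (p.1 : ℤ) - p.2 = d

theorem sub_le_card_diagonalPairs (m d : ℕ) : m - d ≤ #(diagonalPairs m d) :=
  calc m - d = #(univ : Finset (Fin (m - d))) := by simp
    _ ≤ #(diagonalPairs m d) := by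
      refine card_le_card_of_injOn (fun i => (⟨i + d, by omega⟩, ⟨i, by omega⟩)) ?_ ?_
      · intro i _
        simp [diagonalPairs]
      · intro i _ j _ hij
        simp only [Prod.mk.injEq, Fin.mk.injEq] at hij
        exact Fin.ext hij.2

theorem card_diagonalPairs_neg (m : ℕ) (d : ℤ) :
    #(diagonalPairs m (-d)) = #(diagonalPairs m d) :=
  card_equiv (Equiv.prodComm _ _) fun p => by simp [diagonalPairs]; omega

theorem two_mul_sub_add_one_le_card_diagonalPairs_union {m n : ℕ} (hnm : n ≤ m) {r s : Fin n}
    (hrs : r ≠ s) : 2 * (m - n + 1) ≤ #(diagonalPairs m (r - s) ∪ diagonalPairs m (s - r)) := by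
  wlog hsr : s < r generalizing r s
  · rw [union_comm]
    exact this hrs.symm (lt_of_le_of_ne (not_lt.1 hsr) hrs)
  obtain ⟨d, hd_pos, hdn, hrd, hsd⟩ :
      ∃ d : ℕ, 0 < d ∧ d ≤ n - 1 ∧ (r : ℤ) - s = d ∧ (s : ℤ) - r = -d :=
    ⟨r - s, by omega, by omega, by omega, by omega⟩
  have hdisj : Disjoint (diagonalPairs m d) (diagonalPairs m (-d)) :=
    disjoint_filter.2 fun p _ h h' => by omega
  rw [hrd, hsd, card_union_of_disjoint hdisj, card_diagonalPairs_neg]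
  have := sub_le_card_diagonalPairs m d
  omega

theorem sub_one_mul_add_two_le {m n : ℕ} (hnm : n ≤ m) :
    (m - 1) * n + 2 ≤ (n - 1) * m + 2 * (m - n + 1) := by
  obtain ⟨k, rfl⟩ := Nat.exists_eq_add_of_le hnm
  rcases n with _ | n
  · simp
  · rw [show n + 1 + k - 1 = n + k by omega, Nat.add_sub_cancel,
      show n + 1 + k - (n + 1) = k by omega]
    nlinarith

namespace SimpleGraph

variable {V : Type*} [DecidableEq V] {G : SimpleGraph V} [DecidableRel G.Adj]

theorem IsClique.card_sub_one_le_card_interedges {K U : Finset V} (hK : G.IsClique (K : Set V))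
    (hin : (K ∩ U).Nonempty) (hout : (K \ U).Nonempty) :
    #K - 1 ≤ #(G.interedges (K ∩ U) (K \ U)) := by
  have hall : G.interedges (K ∩ U) (K \ U) = (K ∩ U) ×ˢ (K \ U) := by
    refine filter_true_of_mem fun p hp => ?_
    obtain ⟨hp₁, hp₂⟩ := mem_product.1 hp
    refine hK (mem_of_mem_inter_left hp₁) (mem_sdiff.1 hp₂).1 ?_
    intro h
    exact (mem_sdiff.1 hp₂).2 (h ▸ mem_of_mem_inter_right hp₁)
  rw [hall, card_product, ← card_inter_add_card_sdiff K U]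
  have := hin.card_pos
  have := hout.card_pos
  rw [Nat.sub_le_iff_le_add]
  nlinarith

end SimpleGraph

namespace Q

variable {m n : ℕ}

theorem isClique_column (a : Fin m) :
    (Q m n).IsClique (({a} ×ˢ univ : Finset (Fin m × Fin n)) : Set (Fin m × Fin n)) := by
  intro u hu v hv huv
  simp only [coe_product, coe_singleton, coe_univ, Set.mem_prod, Set.mem_singleton_iff,
    Set.mem_univ, and_true] at hu hv
  exact ⟨huv, Or.inl (hu.trans hv.symm)⟩

theorem sub_one_mul_le_card_vertical_interedges {U : Finset (Fin m × Fin n)}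
    (hU : ∀ a : Fin m, ∃ r s : Fin n, (a, r) ∈ U ∧ (a, s) ∉ U) :
    (n - 1) * m ≤ #(((Q m n).interedges U Uᶜ).filter fun p => p.1.1 = p.2.1) := by
  set column : Fin m → Finset (Fin m × Fin n) := fun a => {a} ×ˢ univ
  have hmem : ∀ {a p}, p ∈ (Q m n).interedges (column a ∩ U) (column a \ U) →
      p.1.1 = a ∧ p.2.1 = a ∧ p ∈ (Q m n).interedges U Uᶜ := by
    intro a p hp
    simp only [SimpleGraph.mem_interedges_iff, mem_inter, mem_sdiff, mem_compl, column,
      mem_product, mem_singleton, mem_univ, and_true] at hp ⊢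
    exact ⟨hp.1.1, hp.2.1.1, hp.1.2, hp.2.1.2, hp.2.2⟩
  have hcut : ∀ a, (n - 1) ≤ #((Q m n).interedges (column a ∩ U) (column a \ U)) := by
    intro a
    obtain ⟨r, s, hr, hs⟩ := hU a
    simpa [column] using (isClique_column a).card_sub_one_le_card_interedges
      ⟨(a, r), by simp [hr]⟩ ⟨(a, s), by simp [hs]⟩
  calc (n - 1) * m = ∑ _a : Fin m, (n - 1) := by simp [mul_comm]
    _ ≤ ∑ a, #((Q m n).interedges (column a ∩ U) (column a \ U)) := sum_le_sum fun a _ => hcut a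
    _ = #(univ.biUnion fun a => (Q m n).interedges (column a ∩ U) (column a \ U)) := by
      refine (card_biUnion fun a _ b _ hab => disjoint_left.2 fun p hpa hpb => hab ?_).symm
      exact (hmem hpa).1.symm.trans (hmem hpb).1
    _ ≤ _ := by
      refine card_le_card fun p hp => ?_
      obtain ⟨a, -, hpa⟩ := mem_biUnion.1 hp
      obtain ⟨h₁, h₂, hcut⟩ := hmem hpa
      exact mem_filter.2 ⟨hcut, h₁.trans h₂.symm⟩

theorem card_diagonalPairs_le_card_nonvertical_interedges {U : Finset (Fin m × Fin n)}
    {r s : Fin n} (hrs : r ≠ s) (hr : ∀ a, (a, r) ∈ U) (hs : ∀ a, (a, s) ∉ U) :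
    #(diagonalPairs m (r - s) ∪ diagonalPairs m (s - r)) ≤
      #(((Q m n).interedges U Uᶜ).filter fun p => p.1.1 ≠ p.2.1) := by
  refine card_le_card_of_injOn (fun p => ((p.1, r), (p.2, s))) (fun p hp => ?_) ?_
  · have hdiag : (p.1 : ℤ) - p.2 = r - s ∨ (p.1 : ℤ) - p.2 = s - r := by
      simpa [diagonalPairs] using hp
    have hcol : p.1 ≠ p.2 := by
      intro h
      have := Fin.val_injective.ne hrs
      rw [h] at hdiag
      omega
    simp only [coe_filter, Set.mem_ofPred_eq, SimpleGraph.mk_mem_interedges_iff, mem_compl]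
    exact ⟨⟨hr p.1, hs p.2, fun h => hcol (congrArg (·.1) h), Or.inr (Or.inr hdiag)⟩, hcol⟩
  · intro p _ q _ hpq
    simp only [Prod.mk.injEq] at hpq
    exact Prod.ext hpq.1.1 hpq.2.1

end Q

theorem queen_row_cut_bound_general (m n : ℕ) (hmn : n ≤ m) :
    (∀ r s : Fin n, r ≠ s →
      2 * (m - n + 1) ≤ (Finset.univ.filter (fun p : Fin m × Fin m =>
        ((p.1.1 : ℤ) - p.2.1 = (r.1 : ℤ) - s.1 ∨
         (p.1.1 : ℤ) - p.2.1 = (s.1 : ℤ) - r.1))).card) ∧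
    (∀ U : Finset (Fin m × Fin n),
      (∃ r : Fin n, ∀ a : Fin m, (a, r) ∈ U) →
      (∃ r : Fin n, ∀ a : Fin m, (a, r) ∉ U) →
      (n - 1) * m + 2 * (m - n + 1) ≤
        ((U ×ˢ Uᶜ).filter (fun p => (Q m n).Adj p.1 p.2)).card) ∧
    (m - 1) * n + 2 ≤ (n - 1) * m + 2 * (m - n + 1) := by
  refine ⟨fun r s hrs => ?_, fun U ⟨r, hr⟩ ⟨s, hs⟩ => ?_, sub_one_mul_add_two_le hmn⟩
  · rw [filter_or]
    exact two_mul_sub_add_one_le_card_diagonalPairs_union hmn hrs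
  · have hrs : r ≠ s := by
      rintro rfl
      exact hs ⟨0, r.pos.trans_le hmn⟩ (hr _)
    change _ ≤ #((Q m n).interedges U Uᶜ)
    rw [← card_filter_add_card_filter_not fun p => p.1.1 = p.2.1]
    exact add_le_add (Q.sub_one_mul_le_card_vertical_interedges fun a => ⟨r, s, hr a, hs a⟩)
      ((two_mul_sub_add_one_le_card_diagonalPairs_union hmn hrs).trans
        (Q.card_diagonalPairs_le_card_nonvertical_interedges hrs hr hs))

/-- For `m ≥ n ≥ 2`: any two distinct rows of `Q m n` are joined by at least
`2(m - n + 1)` diagonal edges, and consequently, if `U` contains an entire row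
and its complement contains an entire row, then the cut `E(U, Uᶜ)` has at least
`(n-1)m + 2(m-n+1) ≥ (m-1)n + 2` edges. -/
theorem queen_row_cut_bound (m n : ℕ) (hn : 2 ≤ n) (hmn : n ≤ m) :
    (∀ r s : Fin n, r ≠ s →
      2 * (m - n + 1) ≤ (Finset.univ.filter (fun p : Fin m × Fin m =>
        ((p.1.1 : ℤ) - p.2.1 = (r.1 : ℤ) - s.1 ∨
         (p.1.1 : ℤ) - p.2.1 = (s.1 : ℤ) - r.1))).card) ∧
    (∀ U : Finset (Fin m × Fin n),
      (∃ r : Fin n, ∀ a : Fin m, (a, r) ∈ U) →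
      (∃ r : Fin n, ∀ a : Fin m, (a, r) ∉ U) →
      (n - 1) * m + 2 * (m - n + 1) ≤
        ((U ×ˢ Uᶜ).filter (fun p => (Q m n).Adj p.1 p.2)).card) ∧
    (m - 1) * n + 2 ≤ (n - 1) * m + 2 * (m - n + 1) :=
  queen_row_cut_bound_general m n hmn
end

section
/- Let m ≥ 2 and suppose a ℕ-valued chip configuration on the m vertices of a row (a clique K_m inside the queen's graph) has total exactly m - 1 and is not of one of the two forms: (a) one chip on each of m-1 vertices and zero on one vertex, or (b) all m-1 chips on a single vertex. Then there exists a vertex q with 0 chips such that there is no nonempty U ⊊ row with q ∉ U such that each v ∈ U has ≥ m - |U| chips, i.e. Dhar's algorithm restricted to the clique and started from q burns the whole row. -/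
lemma row_burn_aux {α : Type*} [DecidableEq α] (U : Finset α) (f : α → ℕ) (c : ℕ)
    (h : ∀ v ∈ U, c ≤ f v) (hs : ∑ v ∈ U, f v ≤ U.card * c) :
    ∀ v ∈ U, f v = c := by
  intro v hv
  have h1 : (U.erase v).card • c ≤ ∑ w ∈ U.erase v, f w :=
    Finset.card_nsmul_le_sum _ _ _ (fun w hw => h w (Finset.mem_of_mem_erase hw))
  have h2 : f v + ∑ w ∈ U.erase v, f w = ∑ w ∈ U, f w := Finset.add_sum_erase _ _ hv
  have hc : (U.erase v).card = U.card - 1 := Finset.card_erase_of_mem hv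
  have hcard : 1 ≤ U.card := Finset.card_pos.mpr ⟨v, hv⟩
  obtain ⟨e, he⟩ : ∃ e, U.card = e + 1 := ⟨U.card - 1, by omega⟩
  have h3 : U.card * c = e * c + c := by rw [he]; ring
  simp only [smul_eq_mul, hc, he] at h1
  have h4 : e + 1 - 1 = e := by omega
  rw [h4] at h1
  have := h v hv
  omega

/-- Let `m ≥ 2` and let `D` be a chip configuration on the `m` vertices of a
row (a clique `K m` inside the queen's graph) with total exactly `m - 1` chips,
which is not of form (a): one chip on every vertex except one unchipped vertex,
nor of form (b): all `m - 1` chips on a single vertex. Then there is an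
unchipped vertex `q` from which the whole row burns in Dhar's algorithm: every
nonempty subset `U` of the row avoiding `q` contains a vertex with fewer than
`m - |U|` chips, so no such `U` can remain unburned. -/
theorem row_burning_classification (m : ℕ) (hm : 2 ≤ m) (D : Fin m → ℕ)
    (hdeg : ∑ v, D v = m - 1)
    (hnota : ¬ ∃ w : Fin m, D w = 0 ∧ ∀ v : Fin m, v ≠ w → D v = 1)
    (hnotb : ¬ ∃ w : Fin m, D w = m - 1 ∧ ∀ v : Fin m, v ≠ w → D v = 0) :
    ∃ q : Fin m, D q = 0 ∧
      ∀ U : Finset (Fin m), U.Nonempty → q ∉ U →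
        ∃ v ∈ U, D v < m - U.card := by
  -- there is a zero vertex
  obtain ⟨q, hq⟩ : ∃ q : Fin m, D q = 0 := by
    by_contra h
    push_neg at h
    have h1 : ∀ v : Fin m, 1 ≤ D v := fun v => Nat.one_le_iff_ne_zero.mpr (h v)
    have h2 : (Finset.univ : Finset (Fin m)).card • 1 ≤ ∑ v, D v :=
      Finset.card_nsmul_le_sum _ _ _ (fun v _ => h1 v)
    simp [Finset.card_univ] at h2
    omega
  refine ⟨q, hq, ?_⟩
  intro U hUne hqU
  by_contra hcon
  push_neg at hcon
  set k := U.card with hk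
  have hk1 : 1 ≤ k := Finset.card_pos.mpr hUne
  have hUsub : U ⊆ Finset.univ.erase q := by
    intro v hv
    exact Finset.mem_erase.mpr ⟨fun h => hqU (h ▸ hv), Finset.mem_univ v⟩
  have hkm : k ≤ m - 1 := by
    have := Finset.card_le_card hUsub
    simpa [Finset.card_erase_of_mem, Finset.card_univ] using this
  -- lower bound on the sum over U
  have hlow : k * (m - k) ≤ ∑ v ∈ U, D v := by
    have := Finset.card_nsmul_le_sum U D (m - k) hcon
    simpa using this
  have hup : ∑ v ∈ U, D v ≤ m - 1 := by
    rw [← hdeg]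
    exact Finset.sum_le_sum_of_subset (Finset.subset_univ U)
  obtain ⟨a, ha⟩ : ∃ a, k = a + 1 := ⟨k - 1, by omega⟩
  obtain ⟨b, hb⟩ : ∃ b, m = k + (b + 1) := ⟨m - k - 1, by omega⟩
  have hmk : m - k = b + 1 := by omega
  have hprod : k * (m - k) = a * b + (a + b + 1) := by
    rw [hmk, ha]; ring
  have hm1 : m - 1 = a + b + 1 := by omega
  have hab : a * b = 0 := by omega
  have hsumU : ∑ v ∈ U, D v = m - 1 := by omega
  have hsumEq : ∑ v ∈ U, D v ≤ k * (m - k) := by omega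
  have heach : ∀ v ∈ U, D v = m - k := row_burn_aux U D (m - k) hcon hsumEq
  have hzero : ∀ v : Fin m, v ∉ U → D v = 0 := by
    have hsplit : ∑ v ∈ Finset.univ \ U, D v + ∑ v ∈ U, D v = ∑ v, D v :=
      Finset.sum_sdiff (Finset.subset_univ U)
    have hz : ∑ v ∈ Finset.univ \ U, D v = 0 := by omega
    intro v hv
    have hvmem : v ∈ Finset.univ \ U := Finset.mem_sdiff.mpr ⟨Finset.mem_univ v, hv⟩
    exact (Finset.sum_eq_zero_iff.mp hz) v hvmem
  rcases Nat.mul_eq_zero.mp hab with hA | hB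
  · -- k = 1 : form (b)
    have hk1' : k = 1 := by omega
    obtain ⟨w, hw⟩ := Finset.card_eq_one.mp (by omega : U.card = 1)
    apply hnotb
    refine ⟨w, ?_, ?_⟩
    · have := heach w (by rw [hw]; exact Finset.mem_singleton_self w)
      omega
    · intro v hv
      apply hzero
      rw [hw]
      simp [hv]
  · -- k = m - 1 : form (a)
    have hkeq : k = m - 1 := by omega
    have hUeq : U = Finset.univ.erase q := by
      apply Finset.eq_of_subset_of_card_le hUsub
      rw [Finset.card_erase_of_mem (Finset.mem_univ q), Finset.card_univ, Fintype.card_fin]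
      omega
    apply hnota
    refine ⟨q, hq, ?_⟩
    intro v hv
    have hvU : v ∈ U := by rw [hUeq]; exact Finset.mem_erase.mpr ⟨hv, Finset.mem_univ v⟩
    have := heach v hvU
    omega
end

section
/- For n ≥ 2 with gcd(6, n) = 1, the toroidal queen's graph TQ_{n,n} has an independent set of size n; concretely, the set {(i, 2i mod n) : i ∈ Fin n} is independent in TQ_{n,n}. -/
/-- The toroidal queen's graph on `ZMod m × ZMod n`: two distinct vertices are
adjacent iff they share a row, share a column, or differ by a `ℤ`-multiple of
`(1,1)` or of `(1,-1)`. -/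
def TQ (m n : ℕ) : SimpleGraph (ZMod m × ZMod n) where
  Adj u v := u ≠ v ∧ (u.1 = v.1 ∨ u.2 = v.2 ∨
    (∃ k : ℤ, v.1 - u.1 = (k : ZMod m) ∧ v.2 - u.2 = (k : ZMod n)) ∨
    (∃ k : ℤ, v.1 - u.1 = (k : ZMod m) ∧ u.2 - v.2 = (k : ZMod n)))
  symm := ⟨by
    rintro u v ⟨hne, h⟩
    refine ⟨hne.symm, ?_⟩
    rcases h with h | h | ⟨k, h1, h2⟩ | ⟨k, h1, h2⟩
    · exact Or.inl h.symm
    · exact Or.inr (Or.inl h.symm)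
    · exact Or.inr (Or.inr (Or.inl ⟨-k,
        by rw [Int.cast_neg, ← h1, neg_sub], by rw [Int.cast_neg, ← h2, neg_sub]⟩))
    · exact Or.inr (Or.inr (Or.inr ⟨-k,
        by rw [Int.cast_neg, ← h1, neg_sub], by rw [Int.cast_neg, ← h2, neg_sub]⟩))⟩
  loopless := ⟨fun v h => h.1 rfl⟩

/-- For `n ≥ 2` with `gcd(6, n) = 1`, the toroidal queen's graph `TQ n n` has
an independent set of size `n`; concretely, the set `{(i, 2i) : i ∈ ZMod n}`
is independent and has `n` elements. -/
theorem toroidal_indep_set_coprime_six (n : ℕ) (hn : 2 ≤ n)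
    (hcop : Nat.gcd 6 n = 1) :
    (∀ u ∈ Set.range (fun i : ZMod n => (i, 2 * i)),
      ∀ v ∈ Set.range (fun i : ZMod n => (i, 2 * i)),
        u ≠ v → ¬ (TQ n n).Adj u v) ∧
    (Set.range (fun i : ZMod n => (i, 2 * i))).ncard = n := by

  have hnz : NeZero n := ⟨by omega⟩
  have h2 : IsUnit (2 : ZMod n) := by
    have : Nat.Coprime 2 n := Nat.Coprime.coprime_dvd_left (by norm_num) hcop
    simpa using (ZMod.isUnit_iff_coprime 2 n).mpr this
  have h3 : IsUnit (3 : ZMod n) := by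
    have : Nat.Coprime 3 n := Nat.Coprime.coprime_dvd_left (by norm_num) hcop
    simpa using (ZMod.isUnit_iff_coprime 3 n).mpr this
  have hinj : Function.Injective (fun i : ZMod n => (i, 2 * i)) := by
    intro a b hab
    exact congrArg Prod.fst hab
  constructor
  · rintro u ⟨i, rfl⟩ v ⟨j, rfl⟩ hne hadj
    rcases hadj with ⟨-, h | h | ⟨k, h1, h2'⟩ | ⟨k, h1, h2'⟩⟩
    · simp only at h
      exact hne (by rw [h])
    · simp only at h
      exact hne (by rw [h2.mul_left_cancel h])
    · simp only at h1 h2'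
      have hk0 : (k : ZMod n) = 0 := by linear_combination h2' - 2 * h1
      have : j = i := by
        have h' : j - i = 0 := h1.trans hk0
        linear_combination h'
      exact hne (by rw [this])
    · simp only at h1 h2'
      have h3k : (3 : ZMod n) * (k : ZMod n) = 0 := by linear_combination -2 * h1 - h2'
      have hk0 : (k : ZMod n) = 0 := h3.mul_left_cancel (by simpa using h3k)
      have : j = i := by
        have h' : j - i = 0 := h1.trans hk0
        linear_combination h'
      exact hne (by rw [this])
  · have hcard := Nat.card_range_of_injective hinj
    rw [Nat.card_coe_set_eq] at hcard
    rw [hcard, Nat.card_eq_fintype_card, ZMod.card]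
end
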